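/- arXiv:0708.0697 — 2 statements merged into one kernel-verified Lean document; each statement's English description precedes it below -/
import Mathlib

section
/- Let G be a finite abelian group with |G| = n, let k be a positive integer with k ≤ n, and let p ∈ [1/(k+1), 1/k]. If x ∈ S(G) satisfies ‖x‖_∞ ≤ p, then ‖Vx‖_∞ ≤ k·p² + (1 − k·p)². In particular, the set {x ∈ S(G) : ‖x‖_∞ ≤ p} is mapped by V into the set {x ∈ S(G) : ‖x‖_∞ ≤ f(p)} where f(p) = k·p² + (1 − k·p)². -/
open Finset

/- The quadratic stochastic operator (convolution square) on a finite abelian group: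
`(Vx)(h) = ∑_{f,g ∈ G, f+g=h} x(f)·x(g)`. -/
open Classical in
noncomputable def QSO {G : Type*} [AddCommGroup G] [Fintype G] (x : G → ℝ) : G → ℝ :=
  fun h => ∑ p ∈ Finset.univ.filter (fun p : G × G => p.1 + p.2 = h), x p.1 * x p.2

/-!
The value `(Vx)(h) = ∑_f x(f) x(h - f)` is at most `∑_g x(g)²` by AM-GM, so it suffices to
bound `∑ x²` on the polytope `0 ≤ x ≤ p`, `∑ x = 1`. Writing `x² = p x - x (p - x)`, this means
bounding `∑ x (p - x)` from below. The function `φ(y) = y (p - y)` is concave on `[0, p]` and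
vanishes at both ends, so merging two coordinates (into their sum, or into `p` and their sum
minus `p`) never increases `∑ φ(x)`. Merging repeatedly leaves `k` copies of `p` and the
remainder `t = 1 - k p ∈ [0, p]`, whence `∑ φ(x) ≥ φ(t)`, i.e. `∑ x² ≤ k p² + t²`.
-/

section ConvolutionSquare

variable {G : Type*} [AddCommGroup G] [Fintype G] (x : G → ℝ)

theorem QSO_apply (h : G) : QSO x h = ∑ f, x f * x (h - f) := by
  classical
  rw [QSO, Finset.sum_filter, Fintype.sum_prod_type]
  refine Finset.sum_congr rfl fun f _ => ?_
  simp only [← eq_sub_iff_add_eq']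
  simp

theorem QSO_nonneg (hx : ∀ g, 0 ≤ x g) (h : G) : 0 ≤ QSO x h := by
  rw [QSO_apply]
  exact Finset.sum_nonneg fun f _ => mul_nonneg (hx f) (hx _)

theorem QSO_le_sum_sq (h : G) : QSO x h ≤ ∑ g, x g ^ 2 := by
  have hreindex : ∑ f, x (h - f) ^ 2 = ∑ f, x f ^ 2 :=
    Fintype.sum_equiv (Equiv.subLeft h) _ _ fun _ => rfl
  have hamgm : 2 * QSO x h ≤ ∑ f, (x f ^ 2 + x (h - f) ^ 2) := by
    rw [QSO_apply, Finset.mul_sum]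
    exact Finset.sum_le_sum fun f _ => by
      simpa [mul_assoc] using two_mul_le_add_sq (x f) (x (h - f))
  rw [Finset.sum_add_distrib, hreindex] at hamgm
  linarith

end ConvolutionSquare

section ConcaveMerging

variable {ι : Type*} {x : ι → ℝ} {p : ℝ}

theorem exists_sum_eq_nat_mul_add_and_le_sum_mul_sub [DecidableEq ι] (hp : 0 ≤ p)
    (hx : ∀ i, 0 ≤ x i ∧ x i ≤ p) (s : Finset ι) :
    ∃ (m : ℕ) (r : ℝ), 0 ≤ r ∧ r ≤ p ∧ ∑ i ∈ s, x i = m * p + r ∧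
      r * (p - r) ≤ ∑ i ∈ s, x i * (p - x i) := by
  induction s using Finset.induction with
  | empty => exact ⟨0, 0, le_rfl, hp, by simp, by simp⟩
  | insert a s ha ih =>
    obtain ⟨m, r, hr0, hrp, hsum, hφ⟩ := ih
    obtain ⟨hxa0, hxap⟩ := hx a
    rw [Finset.sum_insert ha, Finset.sum_insert ha]
    by_cases hmerge : x a + r ≤ p
    · refine ⟨m, x a + r, by positivity, hmerge, by rw [hsum]; ring, ?_⟩
      nlinarith [mul_nonneg hxa0 hr0]
    · refine ⟨m + 1, x a + r - p, by linarith, by linarith, by rw [hsum]; push_cast; ring, ?_⟩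
      nlinarith [mul_nonneg (sub_nonneg.2 hxap) (sub_nonneg.2 hrp)]

theorem mul_sub_eq_of_nat_mul_add_eq {m k : ℕ} {r t : ℝ} (hp : 0 < p)
    (hr0 : 0 ≤ r) (hrp : r ≤ p) (ht0 : 0 ≤ t) (htp : t ≤ p) (h : m * p + r = k * p + t) :
    r * (p - r) = t * (p - t) ∨ t * (p - t) = 0 := by
  rcases lt_trichotomy m k with hmk | rfl | hkm
  · have hmk' : (m : ℝ) + 1 ≤ k := by exact_mod_cast hmk
    have ht : t = 0 := by nlinarith
    simp [ht]
  · left; rw [show r = t by linarith]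
  · have hkm' : (k : ℝ) + 1 ≤ m := by exact_mod_cast hkm
    have ht : t = p := by nlinarith
    simp [ht]

theorem mul_sub_le_sum_mul_sub [Fintype ι] (k : ℕ) {t : ℝ} (hp : 0 < p) (ht0 : 0 ≤ t)
    (htp : t ≤ p) (hx : ∀ i, 0 ≤ x i ∧ x i ≤ p) (hsum : ∑ i, x i = k * p + t) :
    t * (p - t) ≤ ∑ i, x i * (p - x i) := by
  classical
  obtain ⟨m, r, hr0, hrp, hsum', hφ⟩ :=
    exists_sum_eq_nat_mul_add_and_le_sum_mul_sub hp.le hx Finset.univ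
  rcases mul_sub_eq_of_nat_mul_add_eq hp hr0 hrp ht0 htp (hsum'.symm.trans hsum) with heq | hzero
  · exact heq ▸ hφ
  · exact hzero ▸ Finset.sum_nonneg fun i _ => mul_nonneg (hx i).1 (sub_nonneg.2 (hx i).2)

theorem sum_sq_le_of_mem_Icc [Fintype ι] (k : ℕ) (hp : 0 < p) (hkp : k * p ≤ 1)
    (hkp' : 1 ≤ (k + 1) * p) (hx : ∀ i, 0 ≤ x i ∧ x i ≤ p) (hsum : ∑ i, x i = 1) :
    ∑ i, x i ^ 2 ≤ k * p ^ 2 + (1 - k * p) ^ 2 := by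
  have hφ := mul_sub_le_sum_mul_sub k (t := 1 - k * p) hp (by linarith) (by linarith) hx
    (by rw [hsum]; ring)
  have hsq : ∑ i, x i ^ 2 = p * ∑ i, x i - ∑ i, x i * (p - x i) := by
    rw [Finset.mul_sum, ← Finset.sum_sub_distrib]
    exact Finset.sum_congr rfl fun i _ => by ring
  rw [hsq, hsum]
  nlinarith

end ConcaveMerging

theorem qso_sup_norm_le_general {G : Type*} [AddCommGroup G] [Fintype G]
    (k : ℕ)
    (p : ℝ) (hp : p ∈ Set.Icc (1 / (k + 1 : ℝ)) (1 / (k : ℝ)))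
    (x : G → ℝ) (hx_nonneg : ∀ g, 0 ≤ x g) (hx_sum : ∑ g, x g = 1)
    (hx_norm : ‖x‖ ≤ p) :
    ‖QSO x‖ ≤ (k : ℝ) * p ^ 2 + (1 - (k : ℝ) * p) ^ 2 := by
  obtain ⟨hp_lower, hp_upper⟩ := hp
  have hp0 : 0 < p := lt_of_lt_of_le (by positivity) hp_lower
  have hkp : (k : ℝ) * p ≤ 1 :=
    calc (k : ℝ) * p ≤ k * (1 / k) := by gcongr
      _ = k / k := mul_one_div _ _
      _ ≤ 1 := div_self_le_one _
  have hkp' : 1 ≤ ((k : ℝ) + 1) * p := (div_le_iff₀' (by positivity)).mp hp_lower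
  have hx_le : ∀ g, x g ≤ p := fun g =>
    (Real.le_norm_self _).trans ((norm_le_pi_norm x g).trans hx_norm)
  refine (pi_norm_le_iff_of_nonneg (by positivity)).2 fun h => ?_
  rw [Real.norm_of_nonneg (QSO_nonneg x hx_nonneg h)]
  exact (QSO_le_sum_sq x h).trans
    (sum_sq_le_of_mem_Icc k hp0 hkp hkp' (fun g => ⟨hx_nonneg g, hx_le g⟩) hx_sum)

/-- Let `G` be a finite abelian group, `k` a positive integer with `k ≤ |G|`, and
`p ∈ [1/(k+1), 1/k]`. If `x ∈ S(G)` satisfies `‖x‖_∞ ≤ p`, then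
`‖Vx‖_∞ ≤ k·p² + (1 − k·p)²`; i.e. `V` maps `{x ∈ S(G) : ‖x‖_∞ ≤ p}` into
`{x ∈ S(G) : ‖x‖_∞ ≤ f(p)}` with `f(p) = k·p² + (1 − k·p)²`. -/
theorem qso_sup_norm_le {G : Type*} [AddCommGroup G] [Fintype G]
    (k : ℕ) (hk : 0 < k) (hkn : k ≤ Fintype.card G)
    (p : ℝ) (hp : p ∈ Set.Icc (1 / (k + 1 : ℝ)) (1 / (k : ℝ)))
    (x : G → ℝ) (hx_nonneg : ∀ g, 0 ≤ x g) (hx_sum : ∑ g, x g = 1)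
    (hx_norm : ‖x‖ ≤ p) :
    ‖QSO x‖ ≤ (k : ℝ) * p ^ 2 + (1 - (k : ℝ) * p) ^ 2 :=
  qso_sup_norm_le_general k p hp x hx_nonneg hx_sum hx_norm
end

section
/- Fix a positive integer k and define f : [1/(k+1), 1/k] → ℝ by f(p) = k·p² + (1 − k·p)². Then: (i) f maps the interval [1/(k+1), 1/k] into itself; (ii) f(p) < p for every p in the open interval (1/(k+1), 1/k), while f(1/(k+1)) = 1/(k+1) and f(1/k) = 1/k; (iii) for every p ∈ [1/(k+1), 1/k), the sequence of iterates f^m(p) is non-increasing and converges to 1/(k+1) as m → ∞. -/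
open Filter Function Set Topology

/-!
Writing `a = 1/(k+1)` and `b = 1/k`, the map `f` satisfies the two identities
`f p - p = ((k+1) p - 1) (k p - 1)` and `(k+1) f p - 1 = k ((k+1) p - 1)²`.
The first shows that `f p ≤ p` exactly on `[a, b]`, with equality only at the endpoints;
the second shows `a ≤ f p` for every `p`. So the iterates of a point of `[a, b)` decrease
and stay in `[a, b)`; their limit is a fixed point of `f` in `[a, b)`, hence equals `a`.
-/

section Iterate

variable {α : Type*}

theorem antitone_iterate_of_mapsTo_of_le [Preorder α] {f : α → α} {s : Set α}
    (hmaps : MapsTo f s s) (hle : ∀ q ∈ s, f q ≤ q) {x : α} (hx : x ∈ s) :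
    Antitone fun m => f^[m] x :=
  antitone_nat_of_succ_le fun m => by
    rw [iterate_succ_apply']
    exact hle _ (hmaps.iterate m hx)

theorem tendsto_iterate_of_mapsTo_Ico [ConditionallyCompleteLinearOrder α] [TopologicalSpace α]
    [OrderTopology α] {f : α → α} {a b x : α} (hf : Continuous f)
    (hmaps : MapsTo f (Ico a b) (Ico a b)) (hle : ∀ q ∈ Ico a b, f q ≤ q)
    (hfix : ∀ q ∈ Ico a b, IsFixedPt f q → q = a) (hx : x ∈ Ico a b) :
    Tendsto (fun m => f^[m] x) atTop (𝓝 a) := by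
  have hmem : ∀ m, f^[m] x ∈ Ico a b := fun m => hmaps.iterate m hx
  have hbdd : BddBelow (range fun m => f^[m] x) := ⟨a, forall_mem_range.2 fun m => (hmem m).1⟩
  have hlim := tendsto_atTop_ciInf (antitone_iterate_of_mapsTo_of_le hmaps hle hx) hbdd
  have hinf : ⨅ m, f^[m] x ∈ Ico a b :=
    ⟨le_ciInf fun m => (hmem m).1, (ciInf_le hbdd 0).trans_lt hx.2⟩
  rwa [← hfix _ hinf (isFixedPt_of_tendsto_iterate hlim hf.continuousAt)]

end Iterate

def maxSumSq (k p : ℝ) : ℝ := k * p ^ 2 + (1 - k * p) ^ 2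

section MaxSumSq

variable {k : ℝ}

theorem continuous_maxSumSq (k : ℝ) : Continuous (maxSumSq k) := by
  unfold maxSumSq
  fun_prop

theorem maxSumSq_sub_self (k p : ℝ) : maxSumSq k p - p = ((k + 1) * p - 1) * (k * p - 1) := by
  unfold maxSumSq
  ring

theorem succ_mul_maxSumSq_sub_one (k p : ℝ) :
    (k + 1) * maxSumSq k p - 1 = k * ((k + 1) * p - 1) ^ 2 := by
  unfold maxSumSq
  ring

theorem isFixedPt_maxSumSq_inv_succ (hk : k + 1 ≠ 0) : IsFixedPt (maxSumSq k) (1 / (k + 1)) := by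
  unfold IsFixedPt maxSumSq
  field_simp
  ring

theorem isFixedPt_maxSumSq_inv (hk : k ≠ 0) : IsFixedPt (maxSumSq k) (1 / k) := by
  unfold IsFixedPt maxSumSq
  field_simp
  ring

theorem inv_succ_le_maxSumSq (hk : 0 ≤ k) (p : ℝ) : 1 / (k + 1) ≤ maxSumSq k p := by
  rw [div_le_iff₀' (by linarith), ← sub_nonneg, succ_mul_maxSumSq_sub_one]
  positivity

theorem maxSumSq_le_self (hk : 0 < k) {p : ℝ} (hp : p ∈ Icc (1 / (k + 1)) (1 / k)) :
    maxSumSq k p ≤ p := by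
  have ha : 0 ≤ (k + 1) * p - 1 := by
    have := (div_le_iff₀' (by linarith : 0 < k + 1)).1 hp.1
    linarith
  have hb : k * p - 1 ≤ 0 := by
    have := (le_div_iff₀' hk).1 hp.2
    linarith
  rw [← sub_nonpos, maxSumSq_sub_self]
  exact mul_nonpos_of_nonneg_of_nonpos ha hb

theorem maxSumSq_lt_self (hk : 0 < k) {p : ℝ} (hp : p ∈ Ioo (1 / (k + 1)) (1 / k)) :
    maxSumSq k p < p := by
  have ha : 0 < (k + 1) * p - 1 := by
    have := (div_lt_iff₀' (by linarith : 0 < k + 1)).1 hp.1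
    linarith
  have hb : k * p - 1 < 0 := by
    have := (lt_div_iff₀' hk).1 hp.2
    linarith
  rw [← sub_neg, maxSumSq_sub_self]
  exact mul_neg_of_pos_of_neg ha hb

theorem mapsTo_maxSumSq_Icc (hk : 0 < k) :
    MapsTo (maxSumSq k) (Icc (1 / (k + 1)) (1 / k)) (Icc (1 / (k + 1)) (1 / k)) :=
  fun p hp => ⟨inv_succ_le_maxSumSq hk.le p, (maxSumSq_le_self hk hp).trans hp.2⟩

theorem mapsTo_maxSumSq_Ico (hk : 0 < k) :
    MapsTo (maxSumSq k) (Ico (1 / (k + 1)) (1 / k)) (Ico (1 / (k + 1)) (1 / k)) :=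
  fun p hp => ⟨inv_succ_le_maxSumSq hk.le p,
    (maxSumSq_le_self hk (Ico_subset_Icc_self hp)).trans_lt hp.2⟩

theorem eq_inv_succ_of_isFixedPt_maxSumSq (hk : 0 < k) {p : ℝ}
    (hp : p ∈ Ico (1 / (k + 1)) (1 / k)) (hfix : IsFixedPt (maxSumSq k) p) : p = 1 / (k + 1) := by
  by_contra hne
  exact (maxSumSq_lt_self hk ⟨lt_of_le_of_ne hp.1 (Ne.symm hne), hp.2⟩).ne hfix

theorem antitone_iterate_maxSumSq (hk : 0 < k) {p : ℝ} (hp : p ∈ Ico (1 / (k + 1)) (1 / k)) :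
    Antitone fun m => (maxSumSq k)^[m] p :=
  antitone_iterate_of_mapsTo_of_le (mapsTo_maxSumSq_Ico hk)
    (fun _ hq => maxSumSq_le_self hk (Ico_subset_Icc_self hq)) hp

theorem tendsto_iterate_maxSumSq (hk : 0 < k) {p : ℝ} (hp : p ∈ Ico (1 / (k + 1)) (1 / k)) :
    Tendsto (fun m => (maxSumSq k)^[m] p) atTop (𝓝 (1 / (k + 1))) :=
  tendsto_iterate_of_mapsTo_Ico (continuous_maxSumSq k) (mapsTo_maxSumSq_Ico hk)
    (fun _ hq => maxSumSq_le_self hk (Ico_subset_Icc_self hq))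
    (fun _ => eq_inv_succ_of_isFixedPt_maxSumSq hk) hp

end MaxSumSq

/-- Fix a positive integer `k` and let `f(p) = k·p² + (1 − k·p)²`. Then
(i) `f` maps `[1/(k+1), 1/k]` into itself;
(ii) `f(p) < p` on the open interval `(1/(k+1), 1/k)`, while the endpoints are fixed
points of `f`;
(iii) for every `p ∈ [1/(k+1), 1/k)`, the sequence of iterates `f^[m] p` is
non-increasing and converges to `1/(k+1)`. -/
theorem iterates_of_max_sum_sq_bound (k : ℕ) (hk : 0 < k)
    (f : ℝ → ℝ) (hf : ∀ p, f p = (k : ℝ) * p ^ 2 + (1 - (k : ℝ) * p) ^ 2) :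
    (∀ p ∈ Set.Icc (1 / (k + 1 : ℝ)) (1 / (k : ℝ)),
        f p ∈ Set.Icc (1 / (k + 1 : ℝ)) (1 / (k : ℝ))) ∧
    (∀ p ∈ Set.Ioo (1 / (k + 1 : ℝ)) (1 / (k : ℝ)), f p < p) ∧
    f (1 / (k + 1 : ℝ)) = 1 / (k + 1 : ℝ) ∧
    f (1 / (k : ℝ)) = 1 / (k : ℝ) ∧
    (∀ p ∈ Set.Ico (1 / (k + 1 : ℝ)) (1 / (k : ℝ)),
        (∀ m : ℕ, f^[m + 1] p ≤ f^[m] p) ∧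
        Tendsto (fun m => f^[m] p) atTop (nhds (1 / (k + 1 : ℝ)))) := by
  obtain rfl : f = maxSumSq k := funext hf
  have hk' : (0 : ℝ) < k := Nat.cast_pos.mpr hk
  refine ⟨mapsTo_maxSumSq_Icc hk', fun p => maxSumSq_lt_self hk',
    isFixedPt_maxSumSq_inv_succ (by positivity), isFixedPt_maxSumSq_inv hk'.ne', fun p hp =>
    ⟨fun m => antitone_iterate_maxSumSq hk' hp m.le_succ, tendsto_iterate_maxSumSq hk' hp⟩⟩
end
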